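/- arXiv:2010.09596 — 2 statements merged into one kernel-verified Lean document; each statement's English description precedes it below -/
import Mathlib

section
/- Let p ∈ [1,∞). Let (N, W, B) be a random vector where N is ℕ-valued and W, B are nonnegative real random variables, and let (Y_j)_{j≥1} be i.i.d. nonnegative random variables with E[Y_1^p] < ∞, independent of (N, W, B). Then (E[(W·Σ_{j=1}^{N} Y_j + B)^p])^{1/p} ≤ (E[Y_1^p])^{1/p}·(E[(N·W)^p])^{1/p} + (E[B^p])^{1/p}. -/
/-!
On the event `{N = n}` the random sum is `Y 0 + ⋯ + Y (n-1)`, which is independent of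
`(N, W)`, so that event contributes `E[W^p; N = n] · E[(Y 0 + ⋯ + Y (n-1))^p]`, and Minkowski's
inequality bounds the second factor by `n^p E[(Y 0)^p]`. Summing over `n` gives
`‖W · Σ_{j<N} Y j‖_p ≤ ‖Y 0‖_p ‖N W‖_p`; one more application of Minkowski adds `B`.
-/

open MeasureTheory ProbabilityTheory

open scoped ENNReal

section

variable {Ω : Type*} [MeasurableSpace Ω] {μ : Measure Ω}

theorem lintegral_eq_tsum_setLIntegral_fiber {β : Type*} [Countable β] [MeasurableSpace β]
    [MeasurableSingletonClass β] {X : Ω → β} (hX : Measurable X) (f : Ω → ℝ≥0∞) :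
    ∫⁻ ω, f ω ∂μ = ∑' b, ∫⁻ ω in X ⁻¹' {b}, f ω ∂μ := by
  rw [← lintegral_iUnion (fun b => hX (measurableSet_singleton b)) (pairwise_disjoint_fiber X),
    ← Set.preimage_iUnion, Set.iUnion_of_singleton, Set.preimage_univ, setLIntegral_univ]

theorem ProbabilityTheory.IndepFun.setLIntegral_preimage_comp_mul_comp {α β : Type*}
    [MeasurableSpace α] [MeasurableSpace β] {X : Ω → α} {Z : Ω → β} (h : IndepFun X Z μ)
    (hX : Measurable X) (hZ : Measurable Z) {f : α → ℝ≥0∞} {g : β → ℝ≥0∞} (hf : Measurable f)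
    (hg : Measurable g) {s : Set α} (hs : MeasurableSet s) :
    ∫⁻ ω in X ⁻¹' s, f (X ω) * g (Z ω) ∂μ
      = (∫⁻ ω in X ⁻¹' s, f (X ω) ∂μ) * ∫⁻ ω, g (Z ω) ∂μ := by
  simp_rw [← lintegral_indicator (hX hs), Set.indicator_mul_left]
  exact lintegral_mul_eq_lintegral_mul_lintegral_of_indepFun''
    ((hf.indicator hs).comp hX).aemeasurable (hg.comp hZ).aemeasurable
    (h.comp (hf.indicator hs) hg)

theorem eLpNorm_sum_le_card_mul_of_identDistrib {p : ℝ≥0∞} (hp : 1 ≤ p) {ι : Type*}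
    (s : Finset ι) {Y : ι → Ω → ℝ} {Z : Ω → ℝ} (hY : ∀ i ∈ s, IdentDistrib (Y i) Z μ μ) :
    eLpNorm (fun ω => ∑ i ∈ s, Y i ω) p μ ≤ s.card * eLpNorm Z p μ := by
  calc eLpNorm (fun ω => ∑ i ∈ s, Y i ω) p μ = eLpNorm (∑ i ∈ s, Y i) p μ := by
        rw [Finset.sum_fn]
    _ ≤ ∑ i ∈ s, eLpNorm (Y i) p μ :=
        eLpNorm_sum_le (fun i hi => (hY i hi).aemeasurable_fst.aestronglyMeasurable) hp
    _ = s.card * eLpNorm Z p μ := by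
        rw [Finset.sum_congr rfl fun i hi => (hY i hi).eLpNorm_eq p, Finset.sum_const,
          nsmul_eq_mul]

theorem eLpNorm_ofReal_eq_lintegral_ofReal_rpow {f : Ω → ℝ} (hf : ∀ ω, 0 ≤ f ω) {p : ℝ}
    (hp : 0 < p) :
    eLpNorm f (ENNReal.ofReal p) μ = (∫⁻ ω, ENNReal.ofReal (f ω ^ p) ∂μ) ^ (1 / p) := by
  rw [eLpNorm_eq_lintegral_rpow_enorm_toReal (by simpa using hp) ENNReal.ofReal_ne_top,
    ENNReal.toReal_ofReal hp.le]
  congr 1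
  refine lintegral_congr fun ω => ?_
  rw [Real.enorm_of_nonneg (hf ω), ENNReal.ofReal_rpow_of_nonneg (hf ω) hp.le]

def randomSum (N : Ω → ℕ) (Y : ℕ → Ω → ℝ) (ω : Ω) : ℝ :=
  ∑ j ∈ Finset.range (N ω), Y j ω

theorem measurable_randomSum {N : Ω → ℕ} {Y : ℕ → Ω → ℝ} (hN : Measurable N)
    (hY : ∀ j, Measurable (Y j)) : Measurable (randomSum N Y) := by
  have h : Measurable fun q : (ℕ → ℝ) × ℕ => ∑ j ∈ Finset.range q.2, q.1 j :=
    measurable_from_prod_countable_left fun n =>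
      Finset.measurable_sum (Finset.range n) fun j _ => measurable_pi_apply j
  exact h.comp ((measurable_pi_lambda _ hY).prodMk hN)

section RandomSumMoment

variable {p : ℝ≥0∞} {N : Ω → ℕ} {W : Ω → ℝ} {Y : ℕ → Ω → ℝ}

theorem setLIntegral_fiber_enorm_mul_randomSum_rpow_le (hp1 : 1 ≤ p) (hp : p ≠ ∞)
    (hN : Measurable N) (hW : Measurable W) (hY : ∀ j, Measurable (Y j))
    (hident : ∀ j, IdentDistrib (Y j) (Y 0) μ μ)
    (hindep : IndepFun (fun ω => (N ω, W ω)) (fun ω j => Y j ω) μ) (n : ℕ) :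
    ∫⁻ ω in N ⁻¹' {n}, ‖W ω * randomSum N Y ω‖ₑ ^ p.toReal ∂μ
      ≤ eLpNorm (Y 0) p μ ^ p.toReal * ∫⁻ ω in N ⁻¹' {n}, ‖(N ω : ℝ) * W ω‖ₑ ^ p.toReal ∂μ := by
  have hp0 : p ≠ 0 := (zero_lt_one.trans_le hp1).ne'
  set q := p.toReal
  have hq : 0 < q := ENNReal.toReal_pos hp0 hp
  set C := eLpNorm (Y 0) p μ
  have hfiber : MeasurableSet (N ⁻¹' {n}) := hN (measurableSet_singleton n)
  have hmoment : ∫⁻ ω, ‖∑ j ∈ Finset.range n, Y j ω‖ₑ ^ q ∂μ ≤ (n : ℝ≥0∞) ^ q * C ^ q := by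
    rw [lintegral_rpow_enorm_eq_rpow_eLpNorm' hq, ← eLpNorm_eq_eLpNorm' hp0 hp,
      ← ENNReal.mul_rpow_of_nonneg _ _ hq.le]
    gcongr
    simpa using eLpNorm_sum_le_card_mul_of_identDistrib hp1 (Finset.range n) fun j _ => hident j
  calc ∫⁻ ω in N ⁻¹' {n}, ‖W ω * randomSum N Y ω‖ₑ ^ q ∂μ
      = ∫⁻ ω in N ⁻¹' {n}, ‖W ω‖ₑ ^ q * ‖∑ j ∈ Finset.range n, Y j ω‖ₑ ^ q ∂μ := by
        refine setLIntegral_congr_fun hfiber fun ω hω => ?_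
        rw [randomSum, show N ω = n from hω, enorm_mul, ENNReal.mul_rpow_of_nonneg _ _ hq.le]
    -- `N ⁻¹' {n}` is, by definition, the preimage of `Prod.fst ⁻¹' {n}` under `(N, W)`.
    _ = (∫⁻ ω in N ⁻¹' {n}, ‖W ω‖ₑ ^ q ∂μ) * ∫⁻ ω, ‖∑ j ∈ Finset.range n, Y j ω‖ₑ ^ q ∂μ :=
        hindep.setLIntegral_preimage_comp_mul_comp (f := fun x => ‖x.2‖ₑ ^ q)
          (g := fun y => ‖∑ j ∈ Finset.range n, y j‖ₑ ^ q) (hN.prodMk hW)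
          (measurable_pi_lambda _ hY) (measurable_snd.enorm.pow_const q)
          ((Finset.measurable_sum _ fun j _ => measurable_pi_apply j).enorm.pow_const q)
          (measurable_fst (measurableSet_singleton n))
    _ ≤ (∫⁻ ω in N ⁻¹' {n}, ‖W ω‖ₑ ^ q ∂μ) * ((n : ℝ≥0∞) ^ q * C ^ q) := by gcongr
    _ = C ^ q * ∫⁻ ω in N ⁻¹' {n}, (n : ℝ≥0∞) ^ q * ‖W ω‖ₑ ^ q ∂μ := by
        rw [lintegral_const_mul _ (hW.enorm.pow_const q)]
        ring
    _ = C ^ q * ∫⁻ ω in N ⁻¹' {n}, ‖(N ω : ℝ) * W ω‖ₑ ^ q ∂μ := by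
        congr 1
        refine setLIntegral_congr_fun hfiber fun ω hω => ?_
        rw [show N ω = n from hω, enorm_mul, ENNReal.mul_rpow_of_nonneg _ _ hq.le,
          Real.enorm_natCast]

theorem eLpNorm_mul_randomSum_le (hp1 : 1 ≤ p) (hp : p ≠ ∞) (hN : Measurable N)
    (hW : Measurable W) (hY : ∀ j, Measurable (Y j))
    (hident : ∀ j, IdentDistrib (Y j) (Y 0) μ μ)
    (hindep : IndepFun (fun ω => (N ω, W ω)) (fun ω j => Y j ω) μ) :
    eLpNorm (fun ω => W ω * randomSum N Y ω) p μ
      ≤ eLpNorm (Y 0) p μ * eLpNorm (fun ω => (N ω : ℝ) * W ω) p μ := by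
  have hp0 : p ≠ 0 := (zero_lt_one.trans_le hp1).ne'
  have hq : 0 < p.toReal := ENNReal.toReal_pos hp0 hp
  have hmoment : ∫⁻ ω, ‖W ω * randomSum N Y ω‖ₑ ^ p.toReal ∂μ
      ≤ eLpNorm (Y 0) p μ ^ p.toReal * ∫⁻ ω, ‖(N ω : ℝ) * W ω‖ₑ ^ p.toReal ∂μ := by
    rw [lintegral_eq_tsum_setLIntegral_fiber hN, lintegral_eq_tsum_setLIntegral_fiber hN,
      ← ENNReal.tsum_mul_left]
    exact ENNReal.tsum_le_tsum
      (setLIntegral_fiber_enorm_mul_randomSum_rpow_le hp1 hp hN hW hY hident hindep)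
  calc eLpNorm (fun ω => W ω * randomSum N Y ω) p μ
      = (∫⁻ ω, ‖W ω * randomSum N Y ω‖ₑ ^ p.toReal ∂μ) ^ (1 / p.toReal) :=
        eLpNorm_eq_lintegral_rpow_enorm_toReal hp0 hp
    _ ≤ (eLpNorm (Y 0) p μ ^ p.toReal
          * ∫⁻ ω, ‖(N ω : ℝ) * W ω‖ₑ ^ p.toReal ∂μ) ^ (1 / p.toReal) := by gcongr
    _ = eLpNorm (Y 0) p μ * eLpNorm (fun ω => (N ω : ℝ) * W ω) p μ := by
        rw [ENNReal.mul_rpow_of_nonneg _ _ (by positivity), one_div, ENNReal.rpow_rpow_inv hq.ne',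
          eLpNorm_eq_lintegral_rpow_enorm_toReal hp0 hp (f := fun ω => (N ω : ℝ) * W ω), one_div]

end RandomSumMoment

end

theorem random_sum_minkowski_general
    {Ω : Type*} [MeasurableSpace Ω] (P : Measure Ω)
    (p : ℝ) (hp : 1 ≤ p)
    (N : Ω → ℕ) (W B : Ω → ℝ) (Y : ℕ → Ω → ℝ)
    (hN : Measurable N) (hW : Measurable W) (hB : Measurable B)
    (hY : ∀ j, Measurable (Y j))
    (hWpos : ∀ ω, 0 ≤ W ω) (hBpos : ∀ ω, 0 ≤ B ω) (hYpos : ∀ j ω, 0 ≤ Y j ω)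
    (hYident : ∀ j, IdentDistrib (Y j) (Y 0) P P)
    (hindep : IndepFun (fun ω => (N ω, W ω, B ω)) (fun ω j => Y j ω) P) :
    (∫⁻ ω, ENNReal.ofReal ((W ω * ∑ j ∈ Finset.range (N ω), Y j ω + B ω) ^ p) ∂P) ^ (1/p)
      ≤ (∫⁻ ω, ENNReal.ofReal (Y 0 ω ^ p) ∂P) ^ (1/p)
          * (∫⁻ ω, ENNReal.ofReal (((N ω : ℝ) * W ω) ^ p) ∂P) ^ (1/p)
        + (∫⁻ ω, ENNReal.ofReal (B ω ^ p) ∂P) ^ (1/p) := by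
  have hp1 : 1 ≤ ENNReal.ofReal p := by simpa using hp
  have hLp := fun f hf => eLpNorm_ofReal_eq_lintegral_ofReal_rpow (μ := P) (f := f) hf
    (zero_lt_one.trans_le hp)
  have hSpos : ∀ ω, 0 ≤ randomSum N Y ω := fun ω => Finset.sum_nonneg fun j _ => hYpos j ω
  have hindepNW : IndepFun (fun ω => (N ω, W ω)) (fun ω j => Y j ω) P :=
    hindep.comp (measurable_fst.prodMk (measurable_fst.comp measurable_snd)) measurable_id
  calc _ = eLpNorm (fun ω => W ω * randomSum N Y ω + B ω) (.ofReal p) P :=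
        (hLp _ fun ω => add_nonneg (mul_nonneg (hWpos ω) (hSpos ω)) (hBpos ω)).symm
    _ ≤ eLpNorm (fun ω => W ω * randomSum N Y ω) (.ofReal p) P + eLpNorm B (.ofReal p) P :=
        eLpNorm_add_le (hW.mul (measurable_randomSum hN hY)).aestronglyMeasurable
          hB.aestronglyMeasurable hp1
    _ ≤ eLpNorm (Y 0) (.ofReal p) P * eLpNorm (fun ω => (N ω : ℝ) * W ω) (.ofReal p) P
          + eLpNorm B (.ofReal p) P := by
        gcongr
        exact eLpNorm_mul_randomSum_le hp1 ENNReal.ofReal_ne_top hN hW hY hYident hindepNW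
    _ = _ := by
        rw [hLp _ (hYpos 0), hLp _ fun ω => mul_nonneg (Nat.cast_nonneg _) (hWpos ω),
          hLp _ hBpos]

/-- **Conditional-Minkowski random-sum inequality.**
Let `p ∈ [1,∞)`. Let `(N, W, B)` be a random vector where `N` is `ℕ`-valued and `W, B` are
nonnegative real random variables, and let `(Y j)` be i.i.d. nonnegative random variables with
`E[Y₁^p] < ∞`, independent of `(N, W, B)`.  Then
`(E[(W·Σ_{j<N} Y_j + B)^p])^{1/p} ≤ (E[Y₁^p])^{1/p}·(E[(N·W)^p])^{1/p} + (E[B^p])^{1/p}`. -/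
theorem random_sum_minkowski
    {Ω : Type*} [MeasurableSpace Ω] (P : Measure Ω) [IsProbabilityMeasure P]
    (p : ℝ) (hp : 1 ≤ p)
    (N : Ω → ℕ) (W B : Ω → ℝ) (Y : ℕ → Ω → ℝ)
    (hN : Measurable N) (hW : Measurable W) (hB : Measurable B)
    (hY : ∀ j, Measurable (Y j))
    (hWpos : ∀ ω, 0 ≤ W ω) (hBpos : ∀ ω, 0 ≤ B ω) (hYpos : ∀ j ω, 0 ≤ Y j ω)
    (hYiid : iIndepFun Y P)
    (hYident : ∀ j, IdentDistrib (Y j) (Y 0) P P)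
    (hYmom : ∫⁻ ω, ENNReal.ofReal (Y 0 ω ^ p) ∂P < ⊤)
    (hindep : IndepFun (fun ω => (N ω, W ω, B ω)) (fun ω j => Y j ω) P) :
    (∫⁻ ω, ENNReal.ofReal ((W ω * ∑ j ∈ Finset.range (N ω), Y j ω + B ω) ^ p) ∂P) ^ (1/p)
      ≤ (∫⁻ ω, ENNReal.ofReal (Y 0 ω ^ p) ∂P) ^ (1/p)
          * (∫⁻ ω, ENNReal.ofReal (((N ω : ℝ) * W ω) ^ p) ∂P) ^ (1/p)
        + (∫⁻ ω, ENNReal.ofReal (B ω ^ p) ∂P) ^ (1/p) :=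
  random_sum_minkowski_general P p hp N W B Y hN hW hB hY hWpos hBpos hYpos hYident hindep
end

section
/- Let (Ω, ℱ, P) be a probability space, (ℱ_n)_{n≥1} a sequence of sub-σ-algebras, and Z^{(n)} ≥ 0 integrable random variables. Suppose there is an integrable nonnegative random variable Z with law ν such that d_1(ν_n, ν) → 0 in probability as n → ∞, where ν_n is a regular conditional distribution of Z^{(n)} given ℱ_n and d_1 is the Wasserstein distance of order 1. Then, for any events ℰ_n (on the same probability space as Z^{(n)}) with P(ℰ_n | ℱ_n) → 0 in probability, one has E[Z^{(n)} 1(ℰ_n) | ℱ_n] → 0 in probability as n → ∞. -/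
open MeasureTheory ProbabilityTheory Filter
open scoped ENNReal

/-- The order-1 Wasserstein distance between probability measures on `ℝ`, via the coupling
formulation `d₁(μ, ν) = inf {E[|X − Y|] : law(X) = μ, law(Y) = ν}`. -/
noncomputable def wasserstein1 (μ ν : Measure ℝ) : ℝ≥0∞ :=
  ⨅ (π : Measure (ℝ × ℝ)) (_ : π.map Prod.fst = μ) (_ : π.map Prod.snd = ν),
    ∫⁻ z, ENNReal.ofReal |z.1 - z.2| ∂π

open Topology

/-!
Since `Z 1_E ≤ c 1_E + (Z - c)⁺` for every level `c`, conditioning on `ℱ_n` gives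
`E[Z⁽ⁿ⁾ 1(ℰ_n) | ℱ_n] ≤ c P(ℰ_n | ℱ_n) + ∫ (x - c)⁺ dν_n`. As `x ↦ (x - c)⁺` is 1-Lipschitz,
the last integral is at most `∫ (x - c)⁺ dν + d₁(ν_n, ν)`; the first term is small for `c`
large because `Z` is integrable, and the second is small outside an event of vanishing
probability.
-/

structure IsRegularCondDistrib {Ω β : Type*} [MeasurableSpace β] (m : MeasurableSpace Ω)
    {m0 : MeasurableSpace Ω} (P : Measure Ω) (X : Ω → β) (ν : Ω → Measure β) : Prop where
  isProbabilityMeasure : ∀ ω, IsProbabilityMeasure (ν ω)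
  measurable_apply : ∀ A, MeasurableSet A → Measurable[m] fun ω => ν ω A
  toReal_apply_ae_eq : ∀ A, MeasurableSet A →
    (fun ω => (ν ω A).toReal) =ᵐ[P] P[(X ⁻¹' A).indicator (fun _ => (1 : ℝ)) | m]

namespace IsRegularCondDistrib

variable {Ω β : Type*} [MeasurableSpace β] {m m0 : MeasurableSpace Ω} {P : Measure Ω}
  {X : Ω → β} {ν : Ω → Measure β}

theorem measurable (hν : IsRegularCondDistrib m P X ν) : Measurable[m] ν :=
  @Measure.measurable_of_measurable_coe _ _ _ m ν hν.measurable_apply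

variable [IsFiniteMeasure P]

theorem setLIntegral_apply (hν : IsRegularCondDistrib m P X ν) (hm : m ≤ m0) (hX : Measurable X)
    {A : Set β} (hA : MeasurableSet A) {S : Set Ω} (hS : MeasurableSet[m] S) :
    ∫⁻ ω in S, ν ω A ∂P = P (X ⁻¹' A ∩ S) := by
  have hprob := hν.isProbabilityMeasure
  have hint : Integrable (fun ω => (ν ω A).toReal) P := by
    rw [integrable_congr (hν.toReal_apply_ae_eq A hA)]
    exact integrable_condExp
  have : ∫ ω in S, (ν ω A).toReal ∂P = P.real (X ⁻¹' A ∩ S) := by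
    rw [setIntegral_congr_ae (hm S hS) ((hν.toReal_apply_ae_eq A hA).mono fun _ h _ => h),
      setIntegral_condExp hm ((integrable_const 1).indicator (hX hA)) hS,
      integral_indicator_const _ (hX hA), measureReal_restrict_apply (hX hA), smul_eq_mul,
      mul_one]
  rw [← ofReal_measureReal, ← this, ofReal_integral_eq_lintegral_ofReal hint.integrableOn
    (ae_of_all _ fun _ => ENNReal.toReal_nonneg)]
  exact setLIntegral_congr_fun (hm S hS) fun ω _ =>
    (ENNReal.ofReal_toReal (measure_ne_top _ _)).symm

theorem bind_restrict_eq_map (hν : IsRegularCondDistrib m P X ν) (hm : m ≤ m0)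
    (hX : Measurable X) {S : Set Ω} (hS : MeasurableSet[m] S) :
    (P.restrict S).bind ν = (P.restrict S).map X := by
  ext A hA
  rw [Measure.bind_apply hA (hν.measurable.mono hm le_rfl).aemeasurable, Measure.map_apply hX hA,
    Measure.restrict_apply (hX hA), hν.setLIntegral_apply hm hX hA hS]

theorem setLIntegral_lintegral (hν : IsRegularCondDistrib m P X ν) (hm : m ≤ m0)
    (hX : Measurable X) {g : β → ℝ≥0∞} (hg : Measurable g) {S : Set Ω} (hS : MeasurableSet[m] S) :
    ∫⁻ ω in S, ∫⁻ x, g x ∂ν ω ∂P = ∫⁻ ω in S, g (X ω) ∂P := by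
  rw [← Measure.lintegral_bind (hν.measurable.mono hm le_rfl).aemeasurable hg.aemeasurable,
    hν.bind_restrict_eq_map hm hX hS, lintegral_map hg hX]

theorem condExp_toReal_comp_ae_eq (hν : IsRegularCondDistrib m P X ν) (hm : m ≤ m0)
    (hX : Measurable X) {g : β → ℝ≥0∞} (hg : Measurable g) (hgX : ∫⁻ ω, g (X ω) ∂P ≠ ∞) :
    P[fun ω => (g (X ω)).toReal | m] =ᵐ[P] fun ω => (∫⁻ x, g x ∂ν ω).toReal := by
  have : SigmaFinite (P.trim hm) := (isFiniteMeasure_trim hm).toSigmaFinite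
  have hG : Measurable[m] fun ω => ∫⁻ x, g x ∂ν ω :=
    (Measure.measurable_lintegral hg).comp hν.measurable
  have hG0 : Measurable fun ω => ∫⁻ x, g x ∂ν ω := hG.mono hm le_rfl
  have hGfin : ∫⁻ ω, ∫⁻ x, g x ∂ν ω ∂P ≠ ∞ := by
    have h := hν.setLIntegral_lintegral hm hX hg MeasurableSet.univ
    rw [Measure.restrict_univ] at h
    rwa [h]
  refine (ae_eq_condExp_of_forall_setIntegral_eq hm
    (integrable_toReal_of_lintegral_ne_top (hg.comp hX).aemeasurable hgX)
    (fun S _ _ => (integrable_toReal_of_lintegral_ne_top hG0.aemeasurable hGfin).integrableOn)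
    (fun S hS _ => ?_) hG.ennreal_toReal.aestronglyMeasurable).symm
  rw [integral_toReal hG0.aemeasurable.restrict (ae_restrict_of_ae (ae_lt_top hG0 hGfin)),
    integral_toReal (hg.comp hX).aemeasurable.restrict
      (ae_restrict_of_ae (ae_lt_top (hg.comp hX) hgX)),
    hν.setLIntegral_lintegral hm hX hg hS]
  rfl

end IsRegularCondDistrib

theorem lintegral_ofReal_le_add_wasserstein1 {f : ℝ → ℝ} (hf : LipschitzWith 1 f)
    (μ ρ : Measure ℝ) :
    ∫⁻ x, ENNReal.ofReal (f x) ∂μ ≤ ∫⁻ x, ENNReal.ofReal (f x) ∂ρ + wasserstein1 μ ρ := by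
  have hf' : Measurable fun x => ENNReal.ofReal (f x) :=
    ENNReal.measurable_ofReal.comp hf.continuous.measurable
  simp only [wasserstein1, ENNReal.add_iInf]
  refine le_iInf₂ fun π hμ => le_iInf fun hρ => ?_
  calc ∫⁻ x, ENNReal.ofReal (f x) ∂μ = ∫⁻ z, ENNReal.ofReal (f z.1) ∂π := by
        rw [← hμ, lintegral_map hf' measurable_fst]
    _ ≤ ∫⁻ z, ENNReal.ofReal (f z.2) + ENNReal.ofReal |z.1 - z.2| ∂π := by
        refine lintegral_mono fun z => ?_
        calc ENNReal.ofReal (f z.1) ≤ ENNReal.ofReal (f z.2 + |z.1 - z.2|) := by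
              refine ENNReal.ofReal_le_ofReal ?_
              have := hf.dist_le_mul z.1 z.2
              rw [NNReal.coe_one, one_mul, Real.dist_eq, Real.dist_eq] at this
              linarith [le_abs_self (f z.1 - f z.2)]
          _ ≤ _ := ENNReal.ofReal_add_le
    _ = ∫⁻ x, ENNReal.ofReal (f x) ∂ρ + ∫⁻ z, ENNReal.ofReal |z.1 - z.2| ∂π := by
        rw [← hρ, lintegral_map hf' measurable_snd]
        exact lintegral_add_left (hf'.comp measurable_snd) _

theorem tendsto_lintegral_ofReal_sub_atTop {α : Type*} [MeasurableSpace α] {μ : Measure α}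
    {f : α → ℝ} (hf : Integrable f μ) :
    Tendsto (fun c : ℝ => ∫⁻ x, ENNReal.ofReal (f x - c) ∂μ) atTop (𝓝 0) := by
  have hlim : ∀ x, Tendsto (fun c : ℝ => ENNReal.ofReal (f x - c)) atTop (𝓝 0) := fun x =>
    tendsto_const_nhds.congr' <| (eventually_ge_atTop (f x)).mono fun c hc =>
      (ENNReal.ofReal_of_nonpos (sub_nonpos.mpr hc)).symm
  simpa using tendsto_lintegral_filter_of_dominated_convergence' (fun x => ENNReal.ofReal (f x))
    (Eventually.of_forall fun c => (hf.aemeasurable.sub_const c).ennreal_ofReal)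
    ((eventually_ge_atTop 0).mono fun c hc => ae_of_all _ fun x =>
      ENNReal.ofReal_le_ofReal (sub_le_self _ hc))
    hf.lintegral_lt_top.ne (ae_of_all _ hlim)

theorem indicator_le_mul_indicator_one_add_max_sub {Ω : Type*} (E : Set Ω) (X : Ω → ℝ) (c : ℝ)
    (ω : Ω) :
    E.indicator X ω ≤ c * E.indicator (fun _ => (1 : ℝ)) ω + max (X ω - c) 0 := by
  by_cases hω : ω ∈ E
  · simp only [Set.indicator_of_mem hω, mul_one]
    linarith [le_max_left (X ω - c) 0]
  · simp only [Set.indicator_of_notMem hω, mul_zero, zero_add]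
    exact le_max_right _ _

theorem condExp_indicator_le {Ω : Type*} {m m0 : MeasurableSpace Ω} {P : Measure Ω}
    [IsFiniteMeasure P] {X : Ω → ℝ} (hX : Integrable X P) {E : Set Ω} (hE : MeasurableSet E)
    (c : ℝ) :
    ∀ᵐ ω ∂P, P[E.indicator X | m] ω ≤
      c * P[E.indicator (fun _ => (1 : ℝ)) | m] ω + P[fun ω => max (X ω - c) 0 | m] ω := by
  have h1 : Integrable (E.indicator fun _ => (1 : ℝ)) P := (integrable_const 1).indicator hE
  have h2 : Integrable (fun ω => max (X ω - c) 0) P := (hX.sub (integrable_const c)).pos_part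
  filter_upwards [condExp_mono (m := m) (hX.indicator hE) ((h1.const_mul c).add h2)
      (ae_of_all _ (indicator_le_mul_indicator_one_add_max_sub E X c)),
    condExp_add (h1.const_mul c) h2 m, condExp_smul (μ := P) c (E.indicator fun _ => (1 : ℝ)) m]
    with ω hmono hadd hsmul
  calc P[E.indicator X | m] ω ≤ P[fun ω => c * E.indicator (fun _ => 1) ω | m] ω
        + P[fun ω => max (X ω - c) 0 | m] ω := hmono.trans_eq hadd
    _ = _ := congrArg (· + _) hsmul

theorem tendstoInMeasure_zero_of_le_mul_add {Ω ι : Type*} {m0 : MeasurableSpace Ω}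
    {P : Measure Ω} {l : Filter ι} {f p : ι → Ω → ℝ} (hf : ∀ i, 0 ≤ᵐ[P] f i)
    (hp : TendstoInMeasure P p l 0)
    (h : ∀ ε > 0, ∃ c : ℝ, ∃ g : ι → Ω → ℝ, (∀ i, ∀ᵐ ω ∂P, f i ω ≤ c * p i ω + g i ω) ∧
      Tendsto (fun i => P {ω | ε ≤ g i ω}) l (𝓝 0)) :
    TendstoInMeasure P f l 0 := by
  rw [tendstoInMeasure_iff_dist] at hp ⊢
  intro ε hε
  obtain ⟨c, g, hle, hg⟩ := h (ε / 2) (half_pos hε)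
  have hη : 0 < ε / (2 * (|c| + 1)) := by positivity
  have hsub : ∀ i, ∀ᵐ ω ∂P, ω ∈ {ω | ε ≤ dist (f i ω) 0} →
      ω ∈ {ω | ε / (2 * (|c| + 1)) ≤ dist (p i ω) 0} ∪ {ω | ε / 2 ≤ g i ω} := by
    intro i
    filter_upwards [hf i, hle i] with ω hf0 hfle hε_le
    simp only [Set.mem_ofPred_eq, Set.mem_union, Real.dist_eq, sub_zero] at hε_le ⊢
    by_contra! hcon
    have : c * p i ω < ε / 2 := calc
      c * p i ω ≤ |c| * |p i ω| := (le_abs_self _).trans (abs_mul c _).le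
      _ ≤ (|c| + 1) * |p i ω| := by gcongr; linarith
      _ < (|c| + 1) * (ε / (2 * (|c| + 1))) := by gcongr; exact hcon.1
      _ = ε / 2 := by field_simp
    linarith [abs_of_nonneg hf0, hcon.2]
  refine tendsto_of_tendsto_of_tendsto_of_le_of_le tendsto_const_nhds
    (by simpa using (hp _ hη).add hg) (fun i => zero_le)
    fun i => (measure_mono_ae (hsub i)).trans (measure_union_le _ _)

theorem condExp_indicator_tendsto_zero_general
    {Ω : Type*} {m0 : MeasurableSpace Ω} (P : Measure Ω) [IsProbabilityMeasure P]
    (F : ℕ → MeasurableSpace Ω) (hF : ∀ n, F n ≤ m0)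
    (Z : ℕ → Ω → ℝ) (hZmeas : ∀ n, Measurable (Z n)) (hZpos : ∀ n ω, 0 ≤ Z n ω)
    (hZint : ∀ n, Integrable (Z n) P)
    (Zlim : Ω → ℝ)
    (hZlint : Integrable Zlim P)
    -- ν_n : a regular conditional distribution of Z^{(n)} given ℱ_n
    (ν : ℕ → Ω → Measure ℝ)
    (hνprob : ∀ n ω, IsProbabilityMeasure (ν n ω))
    (hνmeas : ∀ n (A : Set ℝ), MeasurableSet A → Measurable[F n] (fun ω => ν n ω A))
    (hνcond : ∀ n (A : Set ℝ), MeasurableSet A →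
      (fun ω => (ν n ω A).toReal)
        =ᵐ[P] P[Set.indicator ((Z n) ⁻¹' A) (fun _ => (1:ℝ)) | F n])
    -- d₁(ν_n, law(Z)) → 0 in probability
    (hconv : ∀ δ : ℝ≥0∞, 0 < δ →
      Tendsto (fun n => P {ω | δ ≤ wasserstein1 (ν n ω) (P.map Zlim)}) atTop (nhds 0))
    -- events whose conditional probability given ℱ_n tends to zero in probability
    (Ev : ℕ → Set Ω) (hEv : ∀ n, MeasurableSet (Ev n))
    (hEconv : TendstoInMeasure P
      (fun n => P[Set.indicator (Ev n) (fun _ => (1:ℝ)) | F n]) atTop 0) :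
    TendstoInMeasure P (fun n => P[Set.indicator (Ev n) (Z n) | F n]) atTop 0 := by
  have hν : ∀ n, IsRegularCondDistrib (F n) P (Z n) (ν n) := fun n =>
    ⟨hνprob n, hνmeas n, hνcond n⟩
  refine tendstoInMeasure_zero_of_le_mul_add (fun n => condExp_nonneg (ae_of_all _
    (Set.indicator_nonneg fun ω _ => hZpos n ω))) hEconv fun ε hε => ?_
  set δ := ENNReal.ofReal (ε / 2)
  have hδ : 0 < δ := ENNReal.ofReal_pos.mpr (half_pos hε)
  have hZlaw : Integrable id (P.map Zlim) :=
    (integrable_map_measure aestronglyMeasurable_id hZlint.aemeasurable).mpr hZlint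
  obtain ⟨c, hc⟩ := ((tendsto_lintegral_ofReal_sub_atTop hZlaw).eventually
    (gt_mem_nhds hδ)).exists
  refine ⟨c, fun n ω => (∫⁻ x, ENNReal.ofReal (x - c) ∂ν n ω).toReal, fun n => ?_, ?_⟩
  · filter_upwards [condExp_indicator_le (m := F n) (hZint n) (hEv n) c,
      (hν n).condExp_toReal_comp_ae_eq (g := fun x => ENNReal.ofReal (x - c)) (hF n) (hZmeas n)
        (by fun_prop) ((hZint n).sub (integrable_const c)).lintegral_lt_top.ne] with ω hle heq
    exact hle.trans_eq (congrArg _ heq)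
  · refine tendsto_of_tendsto_of_tendsto_of_le_of_le tendsto_const_nhds (hconv δ hδ)
      (fun n => zero_le) fun n => measure_mono fun ω hω => ?_
    show δ ≤ _
    refine le_of_not_gt fun hd => ?_
    have hW : ∫⁻ x, ENNReal.ofReal (x - c) ∂ν n ω < ENNReal.ofReal ε := calc
      _ ≤ ∫⁻ x, ENNReal.ofReal (x - c) ∂P.map Zlim + wasserstein1 (ν n ω) (P.map Zlim) :=
        lintegral_ofReal_le_add_wasserstein1 (IsometryEquiv.subRight c).isometry.lipschitz _ _
      _ < δ + δ := ENNReal.add_lt_add hc hd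
      _ = ENNReal.ofReal ε := by
        rw [← ENNReal.ofReal_add (by positivity) (by positivity), add_halves]
    exact absurd (ENNReal.toReal_lt_of_lt_ofReal hW) (not_lt.mpr hω)

/-- **Conditional uniform integrability lemma.**
Let `(Ω, ℱ, P)` be a probability space, `(ℱ_n)` sub-σ-algebras, and `Z^{(n)} ≥ 0` integrable.
If there is an integrable nonnegative `Z` whose law `ν` satisfies `d₁(ν_n, ν) → 0` in
probability, where `ν_n` is a regular conditional distribution of `Z^{(n)}` given `ℱ_n`, then
for any events `ℰ_n` with `P(ℰ_n | ℱ_n) → 0` in probability, one has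
`E[Z^{(n)} 1(ℰ_n) | ℱ_n] → 0` in probability. -/
theorem condExp_indicator_tendsto_zero
    {Ω : Type*} {m0 : MeasurableSpace Ω} (P : Measure Ω) [IsProbabilityMeasure P]
    (F : ℕ → MeasurableSpace Ω) (hF : ∀ n, F n ≤ m0)
    (Z : ℕ → Ω → ℝ) (hZmeas : ∀ n, Measurable (Z n)) (hZpos : ∀ n ω, 0 ≤ Z n ω)
    (hZint : ∀ n, Integrable (Z n) P)
    (Zlim : Ω → ℝ) (hZlm : Measurable Zlim) (hZlpos : ∀ ω, 0 ≤ Zlim ω)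
    (hZlint : Integrable Zlim P)
    -- ν_n : a regular conditional distribution of Z^{(n)} given ℱ_n
    (ν : ℕ → Ω → Measure ℝ)
    (hνprob : ∀ n ω, IsProbabilityMeasure (ν n ω))
    (hνmeas : ∀ n (A : Set ℝ), MeasurableSet A → Measurable[F n] (fun ω => ν n ω A))
    (hνcond : ∀ n (A : Set ℝ), MeasurableSet A →
      (fun ω => (ν n ω A).toReal)
        =ᵐ[P] P[Set.indicator ((Z n) ⁻¹' A) (fun _ => (1:ℝ)) | F n])
    -- d₁(ν_n, law(Z)) → 0 in probability
    (hconv : ∀ δ : ℝ≥0∞, 0 < δ →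
      Tendsto (fun n => P {ω | δ ≤ wasserstein1 (ν n ω) (P.map Zlim)}) atTop (nhds 0))
    -- events whose conditional probability given ℱ_n tends to zero in probability
    (Ev : ℕ → Set Ω) (hEv : ∀ n, MeasurableSet (Ev n))
    (hEconv : TendstoInMeasure P
      (fun n => P[Set.indicator (Ev n) (fun _ => (1:ℝ)) | F n]) atTop 0) :
    TendstoInMeasure P (fun n => P[Set.indicator (Ev n) (Z n) | F n]) atTop 0 :=
  condExp_indicator_tendsto_zero_general P F hF Z hZmeas hZpos hZint Zlim hZlint ν hνprob hνmeas
    hνcond hconv Ev hEv hEconv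
end
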